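/- Suppose M is contractive with contraction rate 0 < a < 1. Then ∫ L dμ ≤ b/(1−a) for every invariant measure μ ∈ P(M). -/

import Mathlib

open MeasureTheory Filter Topology
open scoped ENNReal NNReal Classical

noncomputable section

/-- A countable Markov system `(K_{i(e)}, w_e, p_e)_{e ∈ E}` on a metric space `K`:
a partition `(K_j)_{j ∈ N}` of `K` into nonempty Borel sets, source and target maps
`i, t : E → N` (`i` surjective), and for each `e ∈ E` Borel maps `w_e` and probability
functions `p_e` (extended by zero outside `K_{i(e)}`) with
`∑_{e, i(e)=j} p_e(y) = 1` for `y ∈ K_j`. -/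
structure MarkovSystem (K : Type*) [MetricSpace K] [MeasurableSpace K]
    (N : Type*) (E : Type*) where
  Kset : N → Set K
  Kset_nonempty : ∀ j, (Kset j).Nonempty
  Kset_measurable : ∀ j, MeasurableSet (Kset j)
  Kset_disjoint : Pairwise (Function.onFun Disjoint Kset)
  Kset_cover : (⋃ j, Kset j) = Set.univ
  i : E → N
  t : E → N
  i_surj : Function.Surjective i
  w : E → K → K
  p : E → K → ℝ
  w_measurable : ∀ e, Measurable (w e)
  p_measurable : ∀ e, Measurable (p e)
  p_nonneg : ∀ e x, 0 ≤ p e x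
  p_le_one : ∀ e x, p e x ≤ 1
  p_zero_outside : ∀ e x, x ∉ Kset (i e) → p e x = 0
  w_mapsTo : ∀ e, Set.MapsTo (w e) (Kset (i e)) (Kset (t e))
  p_pos_somewhere : ∀ e, ∃ x ∈ Kset (i e), 0 < p e x
  p_tsum_one : ∀ j, ∀ x ∈ Kset j, (∑' e : {e : E // i e = j}, p e.val x) = 1

/-- `Ē = E ∪ {∞}` (one-point compactification); with `E` countable its Borel σ-algebra
consists of all subsets. -/
instance optionMeasurableSpace (E : Type*) : MeasurableSpace (Option E) := ⊤

/-- The code space `Σ̄ = Ē^ℤ`, carrying the product σ-algebra. -/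
abbrev CodeSpace (E : Type*) : Type _ := ℤ → Option E

/-- The left shift `S` on the code space, `(Sσ)_{k-1} = σ_k`. -/
def shiftMap (E : Type*) : CodeSpace E → CodeSpace E := fun σ k => σ (k + 1)

/-- The cylinder set `_m[es₀, …, es_{n}] = {σ : σ_{m+k} = es_k}`. -/
def cylSetL {E : Type*} (m : ℤ) (es : List (Option E)) : Set (CodeSpace E) :=
  {σ | ∀ (k : ℕ) (h : k < es.length), σ (m + (k : ℤ)) = es.get ⟨k, h⟩}

/-- The σ-algebra `𝓕` generated by the cylinder sets `_m[e_m, …, e_0]`, `m ≤ 0`. -/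
def pastAlgebra (E : Type*) : MeasurableSpace (CodeSpace E) :=
  MeasurableSpace.generateFrom
    {A | ∃ es : List (Option E), es ≠ [] ∧ A = cylSetL (1 - (es.length : ℤ)) es}

/-- The conditional entropy `h_S(Λ) = H_Λ((_1[e])_{e ∈ Ē} | 𝓕)`. -/
def entropyS {E : Type*} (Λ : Measure (CodeSpace E)) : ℝ≥0∞ :=
  ∑' eo : Option E,
    ∫⁻ σ, ENNReal.ofReal
        (Real.negMulLog
          ((Λ[Set.indicator {τ : CodeSpace E | τ 1 = eo} (fun _ => (1 : ℝ)) | pastAlgebra E]) σ)) ∂Λ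

namespace MarkovSystem

variable {K : Type*} [MetricSpace K] [MeasurableSpace K] {N E : Type*}

/-- The Markov operator `Uf = ∑_e p_e · (f ∘ w_e)` acting on nonnegative Borel functions. -/
def markovOp (M : MarkovSystem K N E) (f : K → ℝ≥0∞) : K → ℝ≥0∞ :=
  fun x => ∑' e : E, ENNReal.ofReal (M.p e x) * f (M.w e x)

/-- The adjoint operator `U*` acting on measures, `(U*ν)(B) = ∫ U(1_B) dν`. -/
def adjOp (M : MarkovSystem K N E) (ν : Measure K) : Measure K :=
  Measure.sum fun e : E =>
    Measure.map (M.w e) (ν.withDensity fun x => ENNReal.ofReal (M.p e x))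

/-- `μ ∈ P(M)`: `μ` is an invariant Borel probability measure, `U*μ = μ`. -/
def IsInvariantMeasure (M : MarkovSystem K N E) (μ : Measure K) : Prop :=
  IsProbabilityMeasure μ ∧ M.adjOp μ = μ

/-- The path space `Σ_G`: all coordinates lie in `E` and `i(σ_{n+1}) = t(σ_n)`. -/
def pathSpace (M : MarkovSystem K N E) : Set (CodeSpace E) :=
  {σ | ∀ n : ℤ, ∃ e e' : E, σ n = some e ∧ σ (n + 1) = some e' ∧ M.i e' = M.t e}

/-- `T_j = {σ ∈ Σ_G : t(σ_0) = j}`. -/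
def Tset (M : MarkovSystem K N E) (j : N) : Set (CodeSpace E) :=
  {σ | σ ∈ M.pathSpace ∧ ∃ e : E, σ 0 = some e ∧ M.t e = j}

/-- `w` extended to `Ē`, with `w_∞ = id`. -/
def wext (M : MarkovSystem K N E) : Option E → K → K := fun o => o.elim id M.w

/-- `p` extended to `Ē`, with `p_∞ = 0`. -/
def pext (M : MarkovSystem K N E) : Option E → K → ℝ := fun o => o.elim (fun _ => 0) M.p

/-- `i` extended to `Ē`, with `i(∞) = j₀`. -/
def iext (M : MarkovSystem K N E) (j0 : N) : Option E → N := fun o => o.elim j0 M.i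

/-- `t` extended to `Ē`, with `t(∞) = j₀`. -/
def text (M : MarkovSystem K N E) (j0 : N) : Option E → N := fun o => o.elim j0 M.t

/-- `iterW M σ n y = w_{σ_0} ∘ w_{σ_{-1}} ∘ ⋯ ∘ w_{σ_{-n}} (y)`. -/
def iterW (M : MarkovSystem K N E) (σ : CodeSpace E) : ℕ → K → K
  | 0, y => M.wext (σ 0) y
  | n + 1, y => M.iterW σ n (M.wext (σ (-(n + 1 : ℤ))) y)

/-- `orbit M j0 xp σ n = w_{σ_0} ∘ ⋯ ∘ w_{σ_{-n}} (x_{i(σ_{-n})})`. -/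
def orbit (M : MarkovSystem K N E) (j0 : N) (xp : N → K) (σ : CodeSpace E) (n : ℕ) : K :=
  M.iterW σ n (xp (M.iext j0 (σ (-(n : ℤ)))))

/-- `D`: the set of `σ ∈ Σ_G` for which `lim_{m → -∞} w_{σ_0} ∘ ⋯ ∘ w_{σ_m}(x_{i(σ_m)})` exists. -/
def codeDomain (M : MarkovSystem K N E) (j0 : N) (xp : N → K) : Set (CodeSpace E) :=
  {σ | σ ∈ M.pathSpace ∧ ∃ l : K, Tendsto (fun n : ℕ => M.orbit j0 xp σ n) atTop (𝓝 l)}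

/-- The coding map `F`: the above limit on `D`, and `x_{t(σ_0)}` elsewhere. -/
def code (M : MarkovSystem K N E) (j0 : N) (xp : N → K) (σ : CodeSpace E) : K :=
  if h : σ ∈ M.codeDomain j0 xp then h.2.choose else xp (M.text j0 (σ 0))

/-- `Λ ∈ E(M)`: `Λ` is a shift-invariant Borel probability measure with `Λ(D) = 1` and
`E_Λ(1_{_1[e]} | 𝓕) = p_e ∘ F` `Λ`-a.e. for every `e ∈ E` (an equilibrium state). -/
def IsEquilibrium (M : MarkovSystem K N E) (j0 : N) (xp : N → K)
    (Λ : Measure (CodeSpace E)) : Prop :=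
  IsProbabilityMeasure Λ ∧ Measure.map (shiftMap E) Λ = Λ ∧
    Λ (M.codeDomain j0 xp) = 1 ∧
    ∀ e : E,
      (Λ[Set.indicator {σ : CodeSpace E | σ 1 = some e} (fun _ => (1 : ℝ)) | pastAlgebra E])
        =ᵐ[Λ] fun σ => M.p e (M.code j0 xp σ)

/-- `pbar` is the family of continuous extensions `p̄_e` of `p_e|_{K_{i(e)}}` to the closure
of `K_{i(e)}`, extended further by zero on `K`. -/
def IsUCExtensionP (M : MarkovSystem K N E) (pbar : E → K → ℝ) : Prop :=
  ∀ e : E, ContinuousOn (pbar e) (closure (M.Kset (M.i e))) ∧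
    (∀ x ∈ M.Kset (M.i e), pbar e x = M.p e x) ∧
    (∀ x, x ∉ closure (M.Kset (M.i e)) → pbar e x = 0)

/-- `wb` is a family of continuous extensions `w̄_e` of `w_e|_{K_{i(e)}}` to the closure
of `K_{i(e)}`. -/
def IsUCExtensionW (M : MarkovSystem K N E) (wb : E → K → K) : Prop :=
  ∀ e : E, ContinuousOn (wb e) (closure (M.Kset (M.i e))) ∧
    (∀ x ∈ M.Kset (M.i e), wb e x = M.w e x)

/-- The Markov system is uniformly continuous: each `w_e|_{K_{i(e)}}` and `p_e|_{K_{i(e)}}`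
is uniformly continuous. -/
def IsUniformlyContinuous (M : MarkovSystem K N E) : Prop :=
  ∀ e : E, UniformContinuousOn (M.w e) (M.Kset (M.i e)) ∧
    UniformContinuousOn (M.p e) (M.Kset (M.i e))

/-- `∂p_e = p̄_e · 1_{cl(K_{i(e)}) \ K_{i(e)}}`. -/
def dp (M : MarkovSystem K N E) (pbar : E → K → ℝ) (e : E) : K → ℝ :=
  Set.indicator (closure (M.Kset (M.i e)) \ M.Kset (M.i e)) (pbar e)

/-- `Λ ∈ Ẽ(M)` (asymptotic state): shift-invariant probability with `Λ(D) = 1` and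
`E_Λ(1_{_1[e]} | 𝓕) = (p̄_e ∘ F)·1_{T_{i(e)}}` `Λ`-a.e. for every `e`. -/
def IsAsymptotic (M : MarkovSystem K N E) (j0 : N) (xp : N → K) (pbar : E → K → ℝ)
    (Λ : Measure (CodeSpace E)) : Prop :=
  IsProbabilityMeasure Λ ∧ Measure.map (shiftMap E) Λ = Λ ∧
    Λ (M.codeDomain j0 xp) = 1 ∧
    ∀ e : E,
      (Λ[Set.indicator {σ : CodeSpace E | σ 1 = some e} (fun _ => (1 : ℝ)) | pastAlgebra E])
        =ᵐ[Λ] Set.indicator (M.Tset (M.i e)) (fun σ => pbar e (M.code j0 xp σ))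

/-- `Λ ∈ E_⊥(M)`: shift-invariant probability with `Λ(D) = 1` and
`E_Λ(1_{_1[e]} | 𝓕) = (∂p_e ∘ F)·1_{T_{i(e)}}` `Λ`-a.e. for every `e`. -/
def IsPerp (M : MarkovSystem K N E) (j0 : N) (xp : N → K) (pbar : E → K → ℝ)
    (Λ : Measure (CodeSpace E)) : Prop :=
  IsProbabilityMeasure Λ ∧ Measure.map (shiftMap E) Λ = Λ ∧
    Λ (M.codeDomain j0 xp) = 1 ∧
    ∀ e : E,
      (Λ[Set.indicator {σ : CodeSpace E | σ 1 = some e} (fun _ => (1 : ℝ)) | pastAlgebra E])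
        =ᵐ[Λ] Set.indicator (M.Tset (M.i e)) (fun σ => M.dp pbar e (M.code j0 xp σ))

/-- `G = ⋃_{k ≥ 0} ⋃_{j ∈ N} S^{-k}(F^{-1}(K_j) ∩ T_j)`. -/
def Gset (M : MarkovSystem K N E) (j0 : N) (xp : N → K) : Set (CodeSpace E) :=
  ⋃ (k : ℕ) (j : N), (shiftMap E)^[k] ⁻¹' ((M.code j0 xp) ⁻¹' (M.Kset j) ∩ M.Tset j)

/-- `M` is non-degenerate: for every asymptotic state `Λ` there is `i ∈ N` with
`Λ(T_i ∩ F^{-1}(K_i)) > 0`. -/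
def IsNonDegenerate (M : MarkovSystem K N E) (j0 : N) (xp : N → K) (pbar : E → K → ℝ) : Prop :=
  ∀ Λ : Measure (CodeSpace E), M.IsAsymptotic j0 xp pbar Λ →
    ∃ i : N, 0 < Λ (M.Tset i ∩ (M.code j0 xp) ⁻¹' (M.Kset i))

/-- `M` is consistent: `F(Λ) ∈ P(M)` for every asymptotic state `Λ`. -/
def IsConsistent (M : MarkovSystem K N E) (j0 : N) (xp : N → K) (pbar : E → K → ℝ) : Prop :=
  ∀ Λ : Measure (CodeSpace E), M.IsAsymptotic j0 xp pbar Λ →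
    M.IsInvariantMeasure (Measure.map (M.code j0 xp) Λ)

/-- `Rf = ∑_e ∂p_e · (f ∘ w̄_e)`. -/
def Rop (M : MarkovSystem K N E) (pbar : E → K → ℝ) (wb : E → K → K)
    (f : K → ℝ≥0∞) : K → ℝ≥0∞ :=
  fun x => ∑' e : E, ENNReal.ofReal (M.dp pbar e x) * f (wb e x)

/-- `Ω = ⋂_{n ≥ 1} {R^n 1 ≥ 1}`. -/
def OmegaSet (M : MarkovSystem K N E) (pbar : E → K → ℝ) (wb : E → K → K) : Set K :=
  ⋂ n : ℕ, {x : K | 1 ≤ (M.Rop pbar wb)^[n + 1] (fun _ => 1) x}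

/-- `ξ_j = ∑_{e, i(e) = j} sup_{x ∈ K_j} p_e(x)`. -/
def xi (M : MarkovSystem K N E) (j : N) : ℝ≥0∞ :=
  ∑' e : {e : E // M.i e = j}, ⨆ x ∈ M.Kset j, ENNReal.ofReal (M.p e.val x)

/-- `M` has a dominating Markov chain: `ξ_j < ∞` for all `j ∈ N`. -/
def HasDominatingChain (M : MarkovSystem K N E) : Prop := ∀ j : N, M.xi j ≠ ⊤

/-- `ξ_j · q_{j j'} = ∑_{e, i(e) = j, t(e) = j'} sup_{x ∈ K_j} p_e(x)`. -/
def xiq (M : MarkovSystem K N E) (j j' : N) : ℝ≥0∞ :=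
  ∑' e : {e : E // M.i e = j ∧ M.t e = j'}, ⨆ x ∈ M.Kset j, ENNReal.ofReal (M.p e.val x)

/-- `c = ∑_{j'} sup_j ξ_j q_{j j'}`. -/
def cConst (M : MarkovSystem K N E) : ℝ≥0∞ := ∑' j' : N, ⨆ j : N, M.xiq j j'

/-- `α^{x_0}_n({j}) = (1/n) ∑_{k=1}^n ((U*)^k δ_{x_0})(K_j)`. -/
def alphaMeas (M : MarkovSystem K N E) (x0 : K) (n : ℕ) (j : N) : ℝ≥0∞ :=
  (n : ℝ≥0∞)⁻¹ * ∑ k ∈ Finset.range n, (M.adjOp^[k + 1] (Measure.dirac x0)) (M.Kset j)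

/-- Condition (T) at `x_0`: the sequence `(α^{x_0}_n)_n` is uniformly tight. -/
def ConditionT (M : MarkovSystem K N E) (x0 : K) : Prop :=
  ∀ ε : ℝ, 0 < ε → ∃ V : Finset N,
    ∀ n : ℕ, (∑' j : {j : N // j ∉ V}, M.alphaMeas x0 (n + 1) j.val) < ENNReal.ofReal ε

/-- `M` is contractive with contraction rate `a`:
`∑_{e, i(e) = j} p_e(x) d(w_e x, w_e y) ≤ a·d(x, y)` on each `K_j`. -/
def IsContractive (M : MarkovSystem K N E) (a : ℝ) : Prop :=
  ∀ j : N, ∀ x ∈ M.Kset j, ∀ y ∈ M.Kset j,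
    (∑' e : {e : E // M.i e = j},
        ENNReal.ofReal (M.p e.val x * dist (M.w e.val x) (M.w e.val y)))
      ≤ ENNReal.ofReal (a * dist x y)

/-- `L(x) = ∑_j d(x, x_j)·1_{K_j}(x)`. -/
def Lfun (M : MarkovSystem K N E) (xp : N → K) : K → ℝ≥0∞ :=
  fun x => ∑' j : N, Set.indicator (M.Kset j) (fun y => ENNReal.ofReal (dist y (xp j))) x

/-- `b = sup_j sup_{x ∈ K_j} ∑_{e, i(e) = j} p_e(x)·d(w_e(x_{i(e)}), x_{t(e)})`. -/
def bConst (M : MarkovSystem K N E) (xp : N → K) : ℝ≥0∞ :=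
  ⨆ j : N, ⨆ x ∈ M.Kset j,
    ∑' e : {e : E // M.i e = j},
      ENNReal.ofReal (M.p e.val x * dist (M.w e.val (xp (M.i e.val))) (xp (M.t e.val)))

/-- `P^m_x` evaluated on a word: `p_{e_0}(x)·p_{e_1}(w_{e_0}x)·⋯`. -/
def wordProb (M : MarkovSystem K N E) : List (Option E) → K → ℝ
  | [], _ => 1
  | o :: rest, x => M.pext o x * M.wordProb rest (M.wext o x)

/-- `Λ = Φ(μ)`: `Λ` is a shift-invariant Borel probability measure with
`Λ(_m[e_m, …, e_n]) = ∫ P^m_x(_m[e_m, …, e_n]) dμ(x)` for all cylinders with `m ≤ 0`. -/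
def IsPhiOf (M : MarkovSystem K N E) (μ : Measure K) (Λ : Measure (CodeSpace E)) : Prop :=
  IsProbabilityMeasure Λ ∧ Measure.map (shiftMap E) Λ = Λ ∧
    ∀ m : ℤ, m ≤ 0 → ∀ es : List (Option E),
      Λ (cylSetL m es) = ∫⁻ x, ENNReal.ofReal (M.wordProb es x) ∂μ

/-- The (negative of the) energy function: `-u(σ) = -log p_{σ_1}(F(σ))` on `D`
(`+∞` if `p_{σ_1}(F(σ)) = 0`) and `+∞` off `D`, valued in `[0, ∞]`. -/
def negEnergy (M : MarkovSystem K N E) (j0 : N) (xp : N → K) (σ : CodeSpace E) : ℝ≥0∞ :=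
  if σ ∈ M.codeDomain j0 xp then
    (σ 1).elim ⊤ fun e =>
      if M.p e (M.code j0 xp σ) = 0 then ⊤
      else ENNReal.ofReal (-Real.log (M.p e (M.code j0 xp σ)))
  else ⊤

/-- The free energy `h_S(Λ) + ∫ u dΛ`, as an extended real number. -/
def freeEnergy (M : MarkovSystem K N E) (j0 : N) (xp : N → K)
    (Λ : Measure (CodeSpace E)) : EReal :=
  (entropyS Λ : EReal) - ((∫⁻ σ, M.negEnergy j0 xp σ ∂Λ : ℝ≥0∞) : EReal)

/-- `Λ₀ ∈ E(u)`: `Λ₀` is a thermodynamic equilibrium state for the energy function `u`. -/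
def IsEquilibriumForU (M : MarkovSystem K N E) (j0 : N) (xp : N → K)
    (Λ0 : Measure (CodeSpace E)) : Prop :=
  IsProbabilityMeasure Λ0 ∧ Measure.map (shiftMap E) Λ0 = Λ0 ∧ entropyS Λ0 ≠ ⊤ ∧
    M.freeEnergy j0 xp Λ0 =
      sSup {r : EReal | ∃ Λ : Measure (CodeSpace E),
        IsProbabilityMeasure Λ ∧ Measure.map (shiftMap E) Λ = Λ ∧ entropyS Λ ≠ ⊤ ∧
          r = M.freeEnergy j0 xp Λ}

end MarkovSystem

end


variable {K : Type*} [MetricSpace K] [CompleteSpace K] [MeasurableSpace K] [BorelSpace K]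
  {N E : Type*} [Countable N] [Countable E]

/-!
Contractivity and the triangle inequality through `w_e(x_{i(e)})` give the Foster–Lyapunov drift
inequality `U L ≤ a L + b`, and invariance of `μ` gives `∫ U f dμ = ∫ f dμ`; formally
`∫ L ≤ a ∫ L + b`. Since `∫ L` might be infinite, one works with the bounded truncations
`min L c`: by Jensen `U (min f c) ≤ min (U f) c`, so iterating the drift inequality
`∫ min L c ≤ ∫ min (a^k L + b/(1-a)) c`, which tends to at most `b/(1-a)` by dominated
convergence; finally let `c → ∞`.
-/

theorem ENNReal.mul_sum_range_pow_le_div (A B : ℝ≥0∞) (k : ℕ) :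
    B * ∑ i ∈ Finset.range k, A ^ i ≤ B / (1 - A) := by
  rw [div_eq_mul_inv, ← ENNReal.tsum_geometric]
  exact mul_le_mul_right (ENNReal.sum_le_tsum _) B

theorem lintegral_eq_iSup_lintegral_min_natCast {X : Type*} [MeasurableSpace X] {μ : Measure X}
    {V : X → ℝ≥0∞} (hV : Measurable V) :
    ∫⁻ x, V x ∂μ = ⨆ n : ℕ, ∫⁻ x, min (V x) n ∂μ := by
  have hsup : ∀ x, ⨆ n : ℕ, min (V x) n = V x := fun x => by
    rw [← inf_iSup_eq, ENNReal.iSup_natCast, inf_top_eq]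
  calc ∫⁻ x, V x ∂μ = ∫⁻ x, ⨆ n : ℕ, min (V x) n ∂μ := lintegral_congr fun x => (hsup x).symm
    _ = ⨆ n : ℕ, ∫⁻ x, min (V x) n ∂μ :=
        lintegral_iSup (fun n => by fun_prop) fun m n hmn x =>
          min_le_min_left _ (Nat.cast_le.mpr hmn)

namespace MarkovSystem

variable {K : Type*} [MetricSpace K] [MeasurableSpace K] {N E : Type*} (M : MarkovSystem K N E)

theorem exists_mem_Kset (x : K) : ∃ j, x ∈ M.Kset j :=
  Set.mem_iUnion.mp (M.Kset_cover ▸ Set.mem_univ x)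

theorem notMem_Kset_of_ne {x : K} {j j' : N} (hx : x ∈ M.Kset j) (h : j' ≠ j) :
    x ∉ M.Kset j' := fun hx' =>
  Set.disjoint_left.mp (M.Kset_disjoint h) hx' hx

theorem Lfun_eq_of_mem (xp : N → K) {x : K} {j : N} (hx : x ∈ M.Kset j) :
    M.Lfun xp x = ENNReal.ofReal (dist x (xp j)) := by
  rw [Lfun, tsum_eq_single j fun j' hj' => Set.indicator_of_notMem (M.notMem_Kset_of_ne hx hj') _,
    Set.indicator_of_mem hx]

theorem Lfun_ne_top (xp : N → K) (x : K) : M.Lfun xp x ≠ ∞ := by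
  obtain ⟨j, hx⟩ := M.exists_mem_Kset x
  simp [M.Lfun_eq_of_mem xp hx]

theorem measurable_Lfun [OpensMeasurableSpace K] [Countable N] (xp : N → K) :
    Measurable (M.Lfun xp) :=
  Measurable.tsum fun j =>
    ((continuous_id.dist continuous_const).measurable.ennreal_ofReal).indicator
      (M.Kset_measurable j)

theorem tsum_ofReal_p_mul_eq_subtype {x : K} {j : N} (hx : x ∈ M.Kset j) (g : E → ℝ≥0∞) :
    ∑' e, ENNReal.ofReal (M.p e x) * g e
      = ∑' e : {e : E // M.i e = j}, ENNReal.ofReal (M.p e.val x) * g e.val := by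
  refine (tsum_subtype_eq_of_support_subset fun e he => ?_).symm
  by_contra hij
  simp [M.p_zero_outside e x (M.notMem_Kset_of_ne hx hij)] at he

theorem tsum_ofReal_p (x : K) : ∑' e, ENNReal.ofReal (M.p e x) = 1 := by
  obtain ⟨j, hx⟩ := M.exists_mem_Kset x
  have hsum := M.p_tsum_one j x hx
  have hsummable : Summable fun e : {e : E // M.i e = j} => M.p e.val x := by
    by_contra h
    simp [tsum_eq_zero_of_not_summable h] at hsum
  simpa [← ENNReal.ofReal_tsum_of_nonneg (fun e => M.p_nonneg _ _) hsummable, hsum]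
    using M.tsum_ofReal_p_mul_eq_subtype hx 1

theorem markovOp_const (c : ℝ≥0∞) (x : K) : M.markovOp (fun _ => c) x = c := by
  simp only [markovOp, ENNReal.tsum_mul_right, tsum_ofReal_p, one_mul]

theorem markovOp_mul_add_const (f : K → ℝ≥0∞) (s c : ℝ≥0∞) (x : K) :
    M.markovOp (fun y => s * f y + c) x = s * M.markovOp f x + c := by
  simp only [markovOp, mul_add, ENNReal.tsum_add, mul_left_comm _ s, ENNReal.tsum_mul_left,
    ENNReal.tsum_mul_right, tsum_ofReal_p, one_mul]

theorem markovOp_mono {f g : K → ℝ≥0∞} (hfg : f ≤ g) : M.markovOp f ≤ M.markovOp g :=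
  fun _ => ENNReal.tsum_le_tsum fun _ => mul_le_mul_right (hfg _) _

theorem markovOp_min_const_le (f : K → ℝ≥0∞) (c : ℝ≥0∞) (x : K) :
    M.markovOp (fun y => min (f y) c) x ≤ min (M.markovOp f x) c :=
  le_min (M.markovOp_mono (fun _ => min_le_left _ _) x)
    ((M.markovOp_mono (fun _ => min_le_right _ _) x).trans_eq (M.markovOp_const c x))

theorem markovOp_Lfun_le (xp : N → K) (hxp : ∀ j, xp j ∈ M.Kset j) {a : ℝ}
    (hcon : M.IsContractive a) (x : K) :
    M.markovOp (M.Lfun xp) x ≤ ENNReal.ofReal a * M.Lfun xp x + M.bConst xp := by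
  obtain ⟨j, hx⟩ := M.exists_mem_Kset x
  have hterm : ∀ e : {e : E // M.i e = j},
      ENNReal.ofReal (M.p e.val x) * M.Lfun xp (M.w e.val x)
        ≤ ENNReal.ofReal (M.p e.val x * dist (M.w e.val x) (M.w e.val (xp j)))
          + ENNReal.ofReal
              (M.p e.val x * dist (M.w e.val (xp (M.i e.val))) (xp (M.t e.val))) := by
    rintro ⟨e, rfl⟩
    have hp := M.p_nonneg e x
    rw [M.Lfun_eq_of_mem xp (M.w_mapsTo e hx), ← ENNReal.ofReal_mul hp,
      ← ENNReal.ofReal_add (by positivity) (by positivity), ← mul_add]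
    exact ENNReal.ofReal_le_ofReal (mul_le_mul_of_nonneg_left (dist_triangle _ _ _) hp)
  calc M.markovOp (M.Lfun xp) x
      = ∑' e : {e : E // M.i e = j}, ENNReal.ofReal (M.p e.val x) * M.Lfun xp (M.w e.val x) :=
        M.tsum_ofReal_p_mul_eq_subtype hx _
    _ ≤ (∑' e : {e : E // M.i e = j},
            ENNReal.ofReal (M.p e.val x * dist (M.w e.val x) (M.w e.val (xp j))))
          + ∑' e : {e : E // M.i e = j},
              ENNReal.ofReal
                (M.p e.val x * dist (M.w e.val (xp (M.i e.val))) (xp (M.t e.val))) :=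
        (ENNReal.tsum_le_tsum hterm).trans_eq ENNReal.tsum_add
    _ ≤ ENNReal.ofReal (a * dist x (xp j)) + M.bConst xp :=
        add_le_add (hcon j x hx (xp j) (hxp j)) (le_iSup₂_of_le j x (le_iSup_of_le hx le_rfl))
    _ = ENNReal.ofReal a * M.Lfun xp x + M.bConst xp := by
        rw [ENNReal.ofReal_mul' dist_nonneg, M.Lfun_eq_of_mem xp hx]

theorem lintegral_markovOp [Countable E] {μ : Measure K} (hμ : M.adjOp μ = μ)
    {f : K → ℝ≥0∞} (hf : Measurable f) : ∫⁻ x, M.markovOp f x ∂μ = ∫⁻ x, f x ∂μ := by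
  have hp : ∀ e, Measurable fun x => ENNReal.ofReal (M.p e x) :=
    fun e => (M.p_measurable e).ennreal_ofReal
  conv_rhs => rw [← hμ]
  simp only [adjOp, lintegral_sum_measure, markovOp]
  rw [lintegral_tsum (f := fun e x => ENNReal.ofReal (M.p e x) * f (M.w e x)) fun e =>
    ((hp e).mul (hf.comp (M.w_measurable e))).aemeasurable]
  refine tsum_congr fun e => ?_
  rw [lintegral_map hf (M.w_measurable e)]
  exact (lintegral_withDensity_eq_lintegral_mul μ (hp e) (hf.comp (M.w_measurable e))).symm

theorem lintegral_min_le_of_markovOp_le [Countable E] {μ : Measure K} (hμ : M.adjOp μ = μ)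
    {f g : K → ℝ≥0∞} (hf : Measurable f) (hfg : M.markovOp f ≤ g) (c : ℝ≥0∞) :
    ∫⁻ x, min (f x) c ∂μ ≤ ∫⁻ x, min (g x) c ∂μ :=
  calc ∫⁻ x, min (f x) c ∂μ = ∫⁻ x, M.markovOp (fun y => min (f y) c) x ∂μ :=
        (M.lintegral_markovOp hμ (hf.min measurable_const)).symm
    _ ≤ ∫⁻ x, min (g x) c ∂μ :=
        lintegral_mono fun x => (M.markovOp_min_const_le f c x).trans (min_le_min_right c (hfg x))

theorem lintegral_min_le_lintegral_min_pow_mul_add [Countable E] {μ : Measure K}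
    (hμ : M.adjOp μ = μ) {V : K → ℝ≥0∞} (hV : Measurable V) {A B : ℝ≥0∞}
    (hdrift : ∀ x, M.markovOp V x ≤ A * V x + B) (c : ℝ≥0∞) (k : ℕ) :
    ∫⁻ x, min (V x) c ∂μ ≤ ∫⁻ x, min (A ^ k * V x + B / (1 - A)) c ∂μ := by
  have hpartial : ∫⁻ x, min (V x) c ∂μ
      ≤ ∫⁻ x, min (A ^ k * V x + B * ∑ i ∈ Finset.range k, A ^ i) c ∂μ := by
    induction k with
    | zero => simp
    | succ k ih =>
      refine ih.trans (M.lintegral_min_le_of_markovOp_le hμ (by fun_prop) (fun x => ?_) c)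
      calc M.markovOp (fun y => A ^ k * V y + B * ∑ i ∈ Finset.range k, A ^ i) x
          = A ^ k * M.markovOp V x + B * ∑ i ∈ Finset.range k, A ^ i :=
            M.markovOp_mul_add_const V _ _ x
        _ ≤ A ^ k * (A * V x + B) + B * ∑ i ∈ Finset.range k, A ^ i := by
            gcongr; exact hdrift x
        _ = A ^ (k + 1) * V x + B * ∑ i ∈ Finset.range (k + 1), A ^ i := by
            rw [Finset.sum_range_succ]; ring
  exact hpartial.trans (lintegral_mono fun x =>
    min_le_min_right c (add_le_add le_rfl (ENNReal.mul_sum_range_pow_le_div A B k)))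

theorem lintegral_le_div_of_markovOp_le [Countable E] {μ : Measure K}
    (hμ : M.IsInvariantMeasure μ) {V : K → ℝ≥0∞} (hV : Measurable V)
    (hV_ne_top : ∀ᵐ x ∂μ, V x ≠ ∞) {A B : ℝ≥0∞} (hA : A < 1)
    (hdrift : ∀ x, M.markovOp V x ≤ A * V x + B) :
    ∫⁻ x, V x ∂μ ≤ B / (1 - A) := by
  have := hμ.1
  set C := B / (1 - A)
  have htrunc : ∀ n : ℕ, ∫⁻ x, min (V x) n ∂μ ≤ C := by
    intro n
    have hlim : Tendsto (fun k : ℕ => ∫⁻ x, min (A ^ k * V x + C) n ∂μ) atTop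
        (𝓝 (∫⁻ _, min C n ∂μ)) := by
      refine tendsto_lintegral_of_dominated_convergence (fun _ => n) (fun k => by fun_prop)
        (fun k => ae_of_all _ fun x => min_le_right _ _) (by simp) ?_
      filter_upwards [hV_ne_top] with x hx
      have hpow := ENNReal.Tendsto.mul_const
        (ENNReal.tendsto_pow_atTop_nhds_zero_of_lt_one hA) (Or.inr hx)
      simpa using (hpow.add_const C).min (tendsto_const_nhds (x := (n : ℝ≥0∞)))
    calc ∫⁻ x, min (V x) n ∂μ ≤ ∫⁻ _, min C n ∂μ :=
          ge_of_tendsto' hlim (M.lintegral_min_le_lintegral_min_pow_mul_add hμ.2 hV hdrift n)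
      _ ≤ C := by rw [lintegral_const, measure_univ, mul_one]; exact min_le_left _ _
  rw [lintegral_eq_iSup_lintegral_min_natCast hV]
  exact iSup_le htrunc

end MarkovSystem

theorem lintegral_Lfun_le_of_invariant_general
    (M : MarkovSystem K N E) (xp : N → K) (hxp : ∀ j, xp j ∈ M.Kset j)
    (a : ℝ) (ha1 : a < 1) (hcon : M.IsContractive a)
    (μ : Measure K) (hμ : M.IsInvariantMeasure μ) :
    ∫⁻ x, M.Lfun xp x ∂μ ≤ M.bConst xp / (1 - ENNReal.ofReal a) :=
  M.lintegral_le_div_of_markovOp_le hμ (M.measurable_Lfun xp)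
    (ae_of_all _ (M.Lfun_ne_top xp)) (ENNReal.ofReal_lt_one.mpr ha1)
    (M.markovOp_Lfun_le xp hxp hcon)

/-- If `M` is contractive with contraction rate `0 < a < 1`, then
`∫ L dμ ≤ b/(1−a)` for every invariant measure `μ ∈ P(M)`. -/
theorem lintegral_Lfun_le_of_invariant
    (M : MarkovSystem K N E) (j0 : N) (xp : N → K) (hxp : ∀ j, xp j ∈ M.Kset j)
    (a : ℝ) (ha0 : 0 < a) (ha1 : a < 1) (hcon : M.IsContractive a)
    (μ : Measure K) (hμ : M.IsInvariantMeasure μ) :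
    ∫⁻ x, M.Lfun xp x ∂μ ≤ M.bConst xp / (1 - ENNReal.ofReal a) :=
  lintegral_Lfun_le_of_invariant_general M xp hxp a ha1 hcon μ hμ
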